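/- The ray F_ne = {(0,0,z) : z ≥ 0} is a face of the exponential cone K_exp, but it is not an exposed face: there is no z ∈ K_exp* with K_exp ∩ {z}⊥ = F_ne. -/

import Mathlib

def Kexp : Set (EuclideanSpace ℝ (Fin 3)) :=
  {v | (0 < v 1 ∧ v 1 * Real.exp (v 0 / v 1) ≤ v 2) ∨ (v 0 ≤ 0 ∧ 0 ≤ v 2 ∧ v 1 = 0)}

def Fne : Set (EuclideanSpace ℝ (Fin 3)) := {v | v 0 = 0 ∧ v 1 = 0 ∧ 0 ≤ v 2}

/-! A functional `z ∈ K_exp*` vanishing on `F_ne` has `z 2 = 0`. Testing it on `(-1, 0, 0) ∈ K_exp`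
gives `z 0 ≤ 0`, and on the curve `(t, 1, exp t) ⊆ K_exp` gives `t * z 0 + z 1 ≥ 0` for every `t`,
so `z 0 ≥ 0`. Hence `z 0 = 0`, and then `(-1, 0, 0)` lies in `K_exp ∩ z⊥` but not in `F_ne`. -/

open Real

namespace Kexp

lemma one_nonneg {v : EuclideanSpace ℝ (Fin 3)} (hv : v ∈ Kexp) : 0 ≤ v 1 := by
  rcases hv with ⟨h, -⟩ | ⟨-, -, h⟩
  · exact h.le
  · exact h.ge

lemma two_nonneg {v : EuclideanSpace ℝ (Fin 3)} (hv : v ∈ Kexp) : 0 ≤ v 2 := by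
  rcases hv with ⟨h, h'⟩ | ⟨-, h, -⟩
  · exact (mul_nonneg h.le (exp_pos _).le).trans h'
  · exact h

lemma zero_nonpos_of_one_eq_zero {v : EuclideanSpace ℝ (Fin 3)} (hv : v ∈ Kexp)
    (hy : v 1 = 0) : v 0 ≤ 0 := by
  rcases hv with ⟨h, -⟩ | ⟨h, -, -⟩
  · exact absurd (hy ▸ h) (lt_irrefl 0)
  · exact h

lemma exp_curve_mem (t : ℝ) : !₂[t, 1, exp t] ∈ Kexp :=
  Or.inl ⟨by simp, by simp⟩

lemma neg_single_zero_mem : !₂[-1, 0, 0] ∈ Kexp :=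
  Or.inr ⟨by simp, by simp, by simp⟩

end Kexp

namespace Fne

lemma subset_Kexp : Fne ⊆ Kexp :=
  fun _ ⟨h0, h1, h2⟩ => Or.inr ⟨h0.le, h2, h1⟩

lemma isClosed : IsClosed Fne := by
  have hproj (i : Fin 3) : Continuous fun v : EuclideanSpace ℝ (Fin 3) => v i :=
    (EuclideanSpace.proj i).continuous
  exact (isClosed_eq (hproj 0) continuous_const).inter
    ((isClosed_eq (hproj 1) continuous_const).inter (isClosed_le continuous_const (hproj 2)))

lemma convex : Convex ℝ Fne := by
  rintro v ⟨hv0, hv1, hv2⟩ w ⟨hw0, hw1, hw2⟩ a b ha hb -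
  simp only [Fne, Set.mem_ofPred_eq, PiLp.add_apply, PiLp.smul_apply, smul_eq_mul,
    hv0, hv1, hw0, hw1, mul_zero, add_zero, true_and]
  positivity

lemma smul_mem {c : ℝ} (hc : 0 ≤ c) {v : EuclideanSpace ℝ (Fin 3)} (hv : v ∈ Fne) :
    c • v ∈ Fne := by
  obtain ⟨h0, h1, h2⟩ := hv
  simp only [Fne, Set.mem_ofPred_eq, PiLp.smul_apply, smul_eq_mul, h0, h1, mul_zero, true_and]
  positivity

lemma mem_of_add_mem {x y : EuclideanSpace ℝ (Fin 3)} (hx : x ∈ Kexp) (hy : y ∈ Kexp)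
    (hxy : x + y ∈ Fne) : x ∈ Fne ∧ y ∈ Fne := by
  obtain ⟨h0, h1, -⟩ := hxy
  simp only [PiLp.add_apply] at h0 h1
  have hx1 : x 1 = 0 := by linarith [Kexp.one_nonneg hx, Kexp.one_nonneg hy]
  have hy1 : y 1 = 0 := by linarith [Kexp.one_nonneg hx, Kexp.one_nonneg hy]
  have hx0 := Kexp.zero_nonpos_of_one_eq_zero hx hx1
  have hy0 := Kexp.zero_nonpos_of_one_eq_zero hy hy1
  exact ⟨⟨by linarith, hx1, Kexp.two_nonneg hx⟩, ⟨by linarith, hy1, Kexp.two_nonneg hy⟩⟩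

lemma single_two_mem : !₂[0, 0, 1] ∈ Fne :=
  ⟨by simp, by simp, by simp⟩

lemma neg_single_zero_not_mem : !₂[-1, 0, 0] ∉ Fne :=
  fun h => by simpa using h.1

end Fne

section Dual

variable {z : EuclideanSpace ℝ (Fin 3)}

lemma zero_nonpos_of_nonneg_on_Kexp (hz : ∀ v ∈ Kexp, 0 ≤ v 0 * z 0 + v 1 * z 1 + v 2 * z 2) :
    z 0 ≤ 0 := by
  simpa using hz _ Kexp.neg_single_zero_mem

lemma zero_nonneg_of_nonneg_on_Kexp (hz : ∀ v ∈ Kexp, 0 ≤ v 0 * z 0 + v 1 * z 1 + v 2 * z 2)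
    (hz2 : z 2 = 0) : 0 ≤ z 0 := by
  by_contra! hz0
  have := hz _ (Kexp.exp_curve_mem ((-z 1 - 1) / z 0))
  simp only [hz2, Matrix.cons_val_zero, Matrix.cons_val_one, mul_zero, add_zero, one_mul,
    div_mul_cancel₀ _ hz0.ne] at this
  linarith

end Dual

theorem Fne_face_not_exposed :
    (Fne ⊆ Kexp ∧ IsClosed Fne ∧ Convex ℝ Fne ∧
      (∀ (c : ℝ), 0 ≤ c → ∀ v ∈ Fne, c • v ∈ Fne) ∧
      (∀ x y, x ∈ Kexp → y ∈ Kexp → x + y ∈ Fne → x ∈ Fne ∧ y ∈ Fne)) ∧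
    ¬∃ z : EuclideanSpace ℝ (Fin 3),
      (∀ v ∈ Kexp, 0 ≤ v 0 * z 0 + v 1 * z 1 + v 2 * z 2) ∧
      Kexp ∩ {q | q 0 * z 0 + q 1 * z 1 + q 2 * z 2 = 0} = Fne := by
  refine ⟨⟨Fne.subset_Kexp, Fne.isClosed, Fne.convex, fun c hc v hv => Fne.smul_mem hc hv,
    fun x y => Fne.mem_of_add_mem⟩, ?_⟩
  rintro ⟨z, hz, hface⟩
  have hz2 : z 2 = 0 := by
    have h := (hface ▸ Fne.single_two_mem).2
    simpa using h
  have hz0 : z 0 = 0 :=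
    le_antisymm (zero_nonpos_of_nonneg_on_Kexp hz) (zero_nonneg_of_nonneg_on_Kexp hz hz2)
  apply Fne.neg_single_zero_not_mem
  rw [← hface]
  exact ⟨Kexp.neg_single_zero_mem, by simp [hz0, hz2]⟩
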